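/- arXiv:2504.15772 — 4 statements merged into one kernel-verified Lean document; each statement's English description precedes it below -/
import Mathlib

section
/- Let G be a connected graph on n vertices with maximum degree Δ ≥ 1. Then μ₁(G) = Δ + 1 if and only if Δ = n − 1. -/
open scoped Classical

/-- The multiset of Laplacian eigenvalues of a finite simple graph, with multiplicity
(the Laplacian matrix `L = D - A` is real symmetric, hence Hermitian). -/

noncomputable def lapEigs {V : Type*} [Fintype V] (G : SimpleGraph V) : Multiset ℝ :=
  Finset.univ.val.map (SimpleGraph.posSemidef_lapMatrix ℝ G).1.eigenvalues

/-- Laplacian eigenvalues sorted in non-decreasing order. -/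

noncomputable def lapEigsAsc {V : Type*} [Fintype V] (G : SimpleGraph V) : List ℝ :=
  (lapEigs G).sort (· ≤ ·)

/-- `lapMu G k` is the `k`-th largest Laplacian eigenvalue of `G` (1-indexed),
so `lapMu G 1 ≥ lapMu G 2 ≥ ⋯ ≥ lapMu G n`. -/
noncomputable def lapMu {V : Type*} [Fintype V] (G : SimpleGraph V) (k : ℕ) : ℝ :=
  (lapEigsAsc G).getD (Fintype.card V - k) 0

/-- `lapCount G I` is the number of Laplacian eigenvalues of `G` (with multiplicity)
lying in the set `I ⊆ ℝ`. -/

noncomputable def lapCount {V : Type*} [Fintype V] (G : SimpleGraph V) (I : Set ℝ) : ℕ :=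
  ((lapEigs G).filter (· ∈ I)).card

/-!
Let `v` be a vertex of maximum degree `d` and let `x` be `d` at `v`, `-1` on the neighbours of `v`
and `0` elsewhere. The edges at `v` alone contribute `d (d + 1)² = (d + 1) ‖x‖²` to the Laplacian
form, so `μ₁ ≥ d + 1`. If `μ₁ = d + 1`, then `x` attains the maximum of the Rayleigh quotient and is
an eigenvector; the eigen-equation at a vertex where `x` vanishes forces `x` to vanish at all its
neighbours (where `x ≤ 0`), so by connectivity every vertex is `v` or adjacent to it. Conversely
`μ₁ ≤ n` always, because the Laplacian form is at most `n ‖x‖² - (∑ x)²`.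
-/

open Matrix Finset

namespace Matrix.IsHermitian

variable {ι 𝕜 : Type*} [Fintype ι] [DecidableEq ι] [RCLike 𝕜] {A : Matrix ι ι 𝕜}

open scoped MatrixOrder ComplexOrder in
theorem forall_eigenvalues_le_iff_posSemidef (hA : A.IsHermitian) (c : ℝ) :
    (∀ i, hA.eigenvalues i ≤ c) ↔ (c • 1 - A).PosSemidef := by
  rw [← Matrix.le_iff, ← Algebra.algebraMap_eq_smul_one,
    le_algebraMap_iff_spectrum_le hA.isSelfAdjoint, hA.spectrum_real_eq_range_eigenvalues,
    Set.forall_mem_range]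

end Matrix.IsHermitian

namespace Matrix

variable {ι : Type*} [Fintype ι] [DecidableEq ι] {A : Matrix ι ι ℝ}

theorem posSemidef_smul_one_sub_iff (hA : A.IsHermitian) (c : ℝ) :
    (c • 1 - A).PosSemidef ↔ ∀ x, x ⬝ᵥ A *ᵥ x ≤ c * (x ⬝ᵥ x) := by
  rw [posSemidef_iff_dotProduct_mulVec, and_iff_right ((isHermitian_one.smul (.all c)).sub hA)]
  simp only [star_trivial, sub_mulVec, dotProduct_sub, smul_mulVec,
    one_mulVec, dotProduct_smul, smul_eq_mul, sub_nonneg]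

theorem IsHermitian.mulVec_eq_smul_of_dotProduct_eq (hA : A.IsHermitian) {c : ℝ}
    (hle : ∀ y, y ⬝ᵥ A *ᵥ y ≤ c * (y ⬝ᵥ y)) {x : ι → ℝ} (hx : x ⬝ᵥ A *ᵥ x = c * (x ⬝ᵥ x)) :
    A *ᵥ x = c • x := by
  have hzero : star x ⬝ᵥ (c • 1 - A) *ᵥ x = 0 := by
    simp only [star_trivial, sub_mulVec, dotProduct_sub, smul_mulVec, one_mulVec, dotProduct_smul,
      smul_eq_mul, hx, sub_self]
  rw [((posSemidef_smul_one_sub_iff hA c).mpr hle).dotProduct_mulVec_zero_iff, sub_mulVec,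
    smul_mulVec, one_mulVec, sub_eq_zero] at hzero
  exact hzero.symm

end Matrix

namespace SimpleGraph

theorem Reachable.pred_of_adj_closed {V : Type*} {G : SimpleGraph V} {p : V → Prop}
    (hp : ∀ a b, G.Adj a b → p a → p b) {u w : V} (h : G.Reachable u w) (hu : p u) : p w := by
  obtain ⟨q⟩ := h
  induction q with
  | nil => exact hu
  | cons hadj _ ih => exact ih (hp _ _ hadj hu)

theorem lapMu_one_le_iff_forall_mem {V : Type*} [Fintype V] [Nonempty V] (G : SimpleGraph V)
    {c : ℝ} : lapMu G 1 ≤ c ↔ ∀ a ∈ lapEigs G, a ≤ c := by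
  have hlen : (lapEigsAsc G).length = Fintype.card V := by
    simp [lapEigsAsc, lapEigs]
  have hne : lapEigsAsc G ≠ [] := List.ne_nil_of_length_pos (hlen ▸ Fintype.card_pos)
  have hlast : lapMu G 1 = (lapEigsAsc G).getLast hne := by
    have hidx : Fintype.card V - 1 < (lapEigsAsc G).length := by
      rw [hlen]; exact Nat.sub_one_lt Fintype.card_ne_zero
    simp [lapMu, List.getLast_eq_getElem, hlen, List.getElem?_eq_getElem hidx]
  have hmem (a : ℝ) : a ∈ lapEigsAsc G ↔ a ∈ lapEigs G := Multiset.mem_sort _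
  refine ⟨fun h a ha => ?_, fun h => h _ ((hmem _).mp (hlast ▸ List.getLast_mem hne))⟩
  exact ((Multiset.pairwise_sort _ _).rel_getLast ((hmem a).mpr ha)).trans (hlast ▸ h)

variable {V : Type*} [Fintype V] [DecidableEq V] (G : SimpleGraph V) [DecidableRel G.Adj]

-- `lapEigs` is built from the classical decidability instances.
theorem lapEigs_eq_map_eigenvalues :
    lapEigs G = univ.val.map (G.posSemidef_lapMatrix ℝ).isHermitian.eigenvalues := by
  unfold lapEigs
  congr!

theorem lapMu_one_le_iff [Nonempty V] {c : ℝ} :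
    lapMu G 1 ≤ c ↔ ∀ x, x ⬝ᵥ G.lapMatrix ℝ *ᵥ x ≤ c * (x ⬝ᵥ x) := by
  rw [lapMu_one_le_iff_forall_mem, lapEigs_eq_map_eigenvalues, Multiset.forall_mem_map_iff]
  simp only [mem_val, mem_univ, true_implies]
  rw [IsHermitian.forall_eigenvalues_le_iff_posSemidef,
    posSemidef_smul_one_sub_iff (G.posSemidef_lapMatrix ℝ).isHermitian]

theorem lapMatrix_mulVec_eq_lapMu_one_smul [Nonempty V] {x : V → ℝ}
    (hx : x ⬝ᵥ G.lapMatrix ℝ *ᵥ x = lapMu G 1 * (x ⬝ᵥ x)) :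
    G.lapMatrix ℝ *ᵥ x = lapMu G 1 • x :=
  (G.posSemidef_lapMatrix ℝ).isHermitian.mulVec_eq_smul_of_dotProduct_eq
    ((G.lapMu_one_le_iff).mp le_rfl) hx

theorem dotProduct_lapMatrix_mulVec (x : V → ℝ) :
    x ⬝ᵥ G.lapMatrix ℝ *ᵥ x = (∑ i, ∑ j, if G.Adj i j then (x i - x j) ^ 2 else 0) / 2 := by
  rw [← toLinearMap₂'_apply', lapMatrix_toLinearMap₂']

theorem dotProduct_lapMatrix_mulVec_le_card_mul (x : V → ℝ) :
    x ⬝ᵥ G.lapMatrix ℝ *ᵥ x ≤ Fintype.card V * (x ⬝ᵥ x) := by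
  have hsq : ∑ i, ∑ j, (x i - x j) ^ 2 = 2 * Fintype.card V * (x ⬝ᵥ x) - 2 * (∑ i, x i) ^ 2 := by
    simp_rw [sub_sq, sum_add_distrib, sum_sub_distrib, sum_const, card_univ, nsmul_eq_mul,
      mul_assoc, ← mul_sum, ← sum_mul, dotProduct, sq]
    ring
  calc x ⬝ᵥ G.lapMatrix ℝ *ᵥ x ≤ (∑ i, ∑ j, (x i - x j) ^ 2) / 2 := by
        rw [dotProduct_lapMatrix_mulVec]
        gcongr with i _ j _
        split_ifs
        · exact le_rfl
        · positivity
    _ ≤ Fintype.card V * (x ⬝ᵥ x) := by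
        rw [hsq]
        nlinarith [sq_nonneg (∑ i, x i)]

theorem lapMu_one_le_card [Nonempty V] : lapMu G 1 ≤ Fintype.card V :=
  G.lapMu_one_le_iff.mpr G.dotProduct_lapMatrix_mulVec_le_card_mul

theorem sum_neighborFinset_sq_le_dotProduct_lapMatrix_mulVec (v : V) (x : V → ℝ) :
    ∑ u ∈ G.neighborFinset v, (x v - x u) ^ 2 ≤ x ⬝ᵥ G.lapMatrix ℝ *ᵥ x := by
  set g : V → V → ℝ := fun i j => if G.Adj i j then (x i - x j) ^ 2 else 0
  have hg : ∀ i j, 0 ≤ g i j := fun i j => by dsimp only [g]; split_ifs <;> positivity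
  have hrow : ∑ j, g v j = ∑ u ∈ G.neighborFinset v, (x v - x u) ^ 2 := by
    rw [neighborFinset_eq_filter, sum_filter]
  have hcol : ∑ i, g i v = ∑ j, g v j := by
    refine sum_congr rfl fun i _ => ?_
    simp only [g, G.adj_comm i v, ← neg_sub (x v), neg_sq]
  have hsplit : ∑ j, g v j + ∑ i, g i v ≤ ∑ i, ∑ j, g i j := by
    rw [← add_sum_erase univ (fun i => ∑ j, g i j) (mem_univ v),
      ← sum_erase univ (f := fun i => g i v) (a := v) (by simp [g])]
    gcongr with i
    exact single_le_sum (fun j _ => hg i j) (mem_univ v)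
  rw [dotProduct_lapMatrix_mulVec]
  linarith

def starVector (v : V) : V → ℝ :=
  fun u => if u = v then G.degree v else if G.Adj v u then -1 else 0

variable {G}

theorem starVector_self (v : V) : G.starVector v v = G.degree v := if_pos rfl

theorem starVector_of_adj {v u : V} (h : G.Adj v u) : G.starVector v u = -1 := by
  simp [starVector, h, h.ne']

theorem starVector_nonpos {v u : V} (h : u ≠ v) : G.starVector v u ≤ 0 := by
  unfold starVector
  rw [if_neg h]
  split_ifs <;> norm_num

theorem dotProduct_starVector_self (v : V) :
    G.starVector v ⬝ᵥ G.starVector v = G.degree v * (G.degree v + 1) := by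
  have hsq (u : V) : G.starVector v u * G.starVector v u =
      (if u = v then (G.degree v : ℝ) ^ 2 else 0) + if G.Adj v u then 1 else 0 := by
    unfold starVector
    by_cases huv : u = v
    · simp [huv, sq]
    · by_cases hadj : G.Adj v u <;> simp [huv, hadj]
  simp only [dotProduct, hsq, sum_add_distrib, sum_ite_eq', mem_univ, if_true,
    ← degree_eq_sum_if_adj]
  ring

theorem degree_add_one_mul_le_dotProduct_lapMatrix_mulVec (v : V) :
    (G.degree v + 1) * (G.starVector v ⬝ᵥ G.starVector v) ≤
      G.starVector v ⬝ᵥ G.lapMatrix ℝ *ᵥ G.starVector v := by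
  have hstar : ∑ u ∈ G.neighborFinset v, (G.starVector v v - G.starVector v u) ^ 2 =
      G.degree v * (G.degree v + 1) ^ 2 := by
    rw [sum_congr rfl fun u hu => by
      rw [starVector_self, starVector_of_adj ((G.mem_neighborFinset v u).mp hu), sub_neg_eq_add],
      sum_const, card_neighborFinset_eq_degree, nsmul_eq_mul]
  calc _ = ∑ u ∈ G.neighborFinset v, (G.starVector v v - G.starVector v u) ^ 2 := by
        rw [hstar, dotProduct_starVector_self]; ring
    _ ≤ _ := G.sum_neighborFinset_sq_le_dotProduct_lapMatrix_mulVec v _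

theorem degree_add_one_le_lapMu_one {v : V} (hv : 0 < G.degree v) :
    (G.degree v : ℝ) + 1 ≤ lapMu G 1 := by
  have : Nonempty V := ⟨v⟩
  have hpos : 0 < G.starVector v ⬝ᵥ G.starVector v := by
    rw [dotProduct_starVector_self]; positivity
  refine le_of_mul_le_mul_right ?_ hpos
  exact (degree_add_one_mul_le_dotProduct_lapMatrix_mulVec v).trans
    (G.lapMu_one_le_iff.mp le_rfl _)

theorem isUniversal_of_lapMu_one_eq (hconn : G.Connected) {v : V} (hv : 0 < G.degree v)
    (h : lapMu G 1 = G.degree v + 1) : G.IsUniversal v := by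
  have : Nonempty V := ⟨v⟩
  set x := G.starVector v
  have heig : G.lapMatrix ℝ *ᵥ x = (G.degree v + 1 : ℝ) • x := by
    rw [← h]
    refine G.lapMatrix_mulVec_eq_lapMu_one_smul (le_antisymm (G.lapMu_one_le_iff.mp le_rfl x) ?_)
    exact h ▸ degree_add_one_mul_le_dotProduct_lapMatrix_mulVec v
  have hclosed (a b : V) (hab : G.Adj a b) (ha : x a = 0) : x b = 0 := by
    have hva : ¬ G.Adj a v := fun hva => by simp [x, starVector_of_adj hva.symm] at ha
    have hsum : ∑ u ∈ G.neighborFinset a, x u = 0 := by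
      simpa [lapMatrix_mulVec_apply, ha] using congrFun heig a
    have hnonpos : ∀ u ∈ G.neighborFinset a, x u ≤ 0 := fun u hu =>
      starVector_nonpos fun huv => hva (huv ▸ (G.mem_neighborFinset a u).mp hu)
    exact (sum_eq_zero_iff_of_nonpos hnonpos).mp hsum b ((G.mem_neighborFinset a b).mpr hab)
  intro w hvw
  by_contra hadj
  have hw : x w = 0 := by simp [x, starVector, hvw.symm, hadj]
  have hxv := (hconn w v).pred_of_adj_closed hclosed hw
  simp [x, starVector_self, hv.ne'] at hxv

end SimpleGraph

/-- For a connected graph `G` on `n` vertices with maximum degree `Δ ≥ 1`,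
`μ₁(G) = Δ + 1` if and only if `Δ = n − 1`. -/
theorem maxEig_eq_maxDegree_add_one_iff {n : ℕ} (G : SimpleGraph (Fin n))
    [DecidableRel G.Adj] (hconn : G.Connected) (hΔ : 1 ≤ G.maxDegree) :
    lapMu G 1 = (G.maxDegree : ℝ) + 1 ↔ G.maxDegree = n - 1 := by
  have : Nonempty (Fin n) := hconn.nonempty
  obtain ⟨v, hv⟩ := G.exists_maximal_degree_vertex
  rw [hv] at hΔ ⊢
  refine ⟨fun h => ?_, fun h => ?_⟩
  · simpa using (G.degree_eq_card_sub_one v).mpr (G.isUniversal_of_lapMu_one_eq hconn hΔ h)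
  · have hn : G.degree v + 1 = n := by
      have := G.degree_lt_card_verts v
      rw [Fintype.card_fin] at this
      omega
    have hupp : lapMu G 1 ≤ n := by simpa using G.lapMu_one_le_card
    have hn' : (G.degree v : ℝ) + 1 = n := by exact_mod_cast hn
    exact le_antisymm (hn' ▸ hupp) (G.degree_add_one_le_lapMu_one hΔ)
end

section
/- For any simple graph G, the largest Laplacian eigenvalue satisfies μ₁(G) ≤ max over edges uv of (d(u) + d(v) − |N(u) ∩ N(v)|), where the maximum is over all edges uv of G (assume G has at least one edge). -/
/-!
Let `x` be an eigenvector for `μ = μ₁ > 0`, with a positive entry (replace `x` by `-x` if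
needed), let `u` be a vertex where `x` is maximal and `v` a neighbour of `u` where `x` is
minimal on `N(u)`; the eigen-equation at `u` forces `x v < x u`. Subtracting the
eigen-equations at `u` and `v` gives
`μ (x u - x v) = ∑_{w ∈ N(u)} (x u - x w) + ∑_{w ∈ N(v)} (x w - x v)`,
and every `w ∈ N(u) ∪ N(v)` contributes at most `x u - x v`. Hence
`μ ≤ |N(u) ∪ N(v)| = d(u) + d(v) - |N(u) ∩ N(v)|`.
-/

open scoped Classical

open Finset Matrix

theorem lapMu_mem_lapEigs {V : Type*} [Fintype V] (G : SimpleGraph V) {k : ℕ} (hk : 1 ≤ k)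
    (hkV : k ≤ Fintype.card V) : lapMu G k ∈ lapEigs G := by
  have hlen : (lapEigsAsc G).length = Fintype.card V := by
    simp [lapEigsAsc, lapEigs]
  have hidx : Fintype.card V - k < (lapEigsAsc G).length := by omega
  rw [lapMu, List.getD_eq_getElem _ _ hidx, ← Multiset.mem_sort (· ≤ ·)]
  exact List.getElem_mem hidx

theorem exists_lapMatrix_mulVec_eq_smul_of_mem_lapEigs {V : Type*} [Fintype V] [DecidableEq V]
    (G : SimpleGraph V) [DecidableRel G.Adj] {μ : ℝ} (hμ : μ ∈ lapEigs G) :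
    ∃ x ≠ 0, G.lapMatrix ℝ *ᵥ x = μ • x := by
  -- `lapEigs` is built from the classically decidable Laplacian.
  obtain rfl : ‹DecidableEq V› = fun a b => Classical.propDecidable (a = b) :=
    Subsingleton.elim _ _
  obtain rfl : ‹DecidableRel G.Adj› = fun a b => Classical.propDecidable (G.Adj a b) :=
    Subsingleton.elim _ _
  obtain ⟨i, -, rfl⟩ := Multiset.mem_map.1 hμ
  have hA := (SimpleGraph.posSemidef_lapMatrix ℝ G).1
  refine ⟨hA.eigenvectorBasis i, fun h => hA.eigenvectorBasis.orthonormal.ne_zero i ?_,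
    hA.mulVec_eigenvectorBasis i⟩
  simpa using congrArg (WithLp.toLp 2) h

namespace SimpleGraph

variable {V : Type*} [Fintype V] [DecidableEq V] (G : SimpleGraph V) [DecidableRel G.Adj]

def dasBound (u v : V) : ℝ :=
  G.degree u + G.degree v - (G.neighborFinset u ∩ G.neighborFinset v).card

theorem dasBound_eq_card_union (u v : V) :
    G.dasBound u v = (G.neighborFinset u ∪ G.neighborFinset v).card := by
  have := card_union_add_card_inter (G.neighborFinset u) (G.neighborFinset v)
  rw [card_neighborFinset_eq_degree, card_neighborFinset_eq_degree] at this
  rw [dasBound, sub_eq_iff_eq_add]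
  exact_mod_cast this.symm

variable {G} {μ : ℝ} {x : V → ℝ}

theorem mul_apply_eq_sum_sub_of_mulVec_eq_smul (hx : G.lapMatrix ℝ *ᵥ x = μ • x) (u : V) :
    μ * x u = ∑ w ∈ G.neighborFinset u, (x u - x w) := by
  rw [← smul_eq_mul, ← Pi.smul_apply, ← hx, lapMatrix_mulVec_apply, sum_sub_distrib, sum_const,
    card_neighborFinset_eq_degree, nsmul_eq_mul]

theorem mul_sub_le_dasBound_mul_sub (hx : G.lapMatrix ℝ *ᵥ x = μ • x) {u v : V}
    (hu : ∀ w ∈ G.neighborFinset v, x w ≤ x u) (hv : ∀ w ∈ G.neighborFinset u, x v ≤ x w) :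
    μ * (x u - x v) ≤ G.dasBound u v * (x u - x v) := by
  set A := G.neighborFinset u
  set B := G.neighborFinset v
  calc μ * (x u - x v)
      = ∑ w ∈ A ∪ B, ((if w ∈ A then x u - x w else 0) + (if w ∈ B then x w - x v else 0)) := by
        rw [sum_add_distrib, sum_ite_mem, sum_ite_mem, union_inter_cancel_left,
          union_inter_cancel_right, mul_sub, mul_apply_eq_sum_sub_of_mulVec_eq_smul hx,
          mul_apply_eq_sum_sub_of_mulVec_eq_smul hx, sub_eq_add_neg, ← sum_neg_distrib]
        simp only [neg_sub]
        rfl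
    _ ≤ ∑ w ∈ A ∪ B, (x u - x v) := by
        refine sum_le_sum fun w hw => ?_
        split_ifs with hA hB hB
        · linarith
        · linarith [hv w hA]
        · linarith [hu w hB]
        · exact absurd (mem_union.1 hw) (by tauto)
    _ = G.dasBound u v * (x u - x v) := by
        rw [sum_const, nsmul_eq_mul, dasBound_eq_card_union]

theorem exists_adj_le_dasBound_of_pos (hx : G.lapMatrix ℝ *ᵥ x = μ • x) (hμ : 0 < μ)
    (hpos : ∃ w, 0 < x w) : ∃ u v, G.Adj u v ∧ μ ≤ G.dasBound u v := by
  obtain ⟨w₀, hw₀⟩ := hpos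
  obtain ⟨u, -, hu⟩ := exists_max_image univ x ⟨w₀, mem_univ w₀⟩
  have hsum : ∑ w ∈ G.neighborFinset u, (0 : ℝ) < ∑ w ∈ G.neighborFinset u, (x u - x w) := by
    rw [sum_const_zero, ← mul_apply_eq_sum_sub_of_mulVec_eq_smul hx]
    exact mul_pos hμ (hw₀.trans_le (hu w₀ (mem_univ w₀)))
  obtain ⟨w, hw, hxw⟩ := exists_lt_of_sum_lt hsum
  obtain ⟨v, hv, hvmin⟩ := exists_min_image _ x ⟨w, hw⟩
  have hc : 0 < x u - x v := by linarith [hvmin w hw]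
  refine ⟨u, v, (mem_neighborFinset G u v).1 hv, le_of_mul_le_mul_right ?_ hc⟩
  exact mul_sub_le_dasBound_mul_sub hx (fun w _ => hu w (mem_univ w)) hvmin

theorem exists_adj_le_dasBound (hx : G.lapMatrix ℝ *ᵥ x = μ • x) (hx0 : x ≠ 0) (hμ : 0 < μ) :
    ∃ u v, G.Adj u v ∧ μ ≤ G.dasBound u v := by
  obtain ⟨w, hw⟩ := Function.ne_iff.1 hx0
  rcases hw.lt_or_gt with hneg | hpos
  · refine exists_adj_le_dasBound_of_pos (x := -x) ?_ hμ ⟨w, by simpa using hneg⟩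
    rw [mulVec_neg, hx, smul_neg]
  · exact exists_adj_le_dasBound_of_pos hx hμ ⟨w, hpos⟩

end SimpleGraph

/-- `μ₁(G) ≤ max { d(u) + d(v) − |N(u) ∩ N(v)| : uv ∈ E(G) }` for a graph with at
least one edge (the maximum is taken over all ordered pairs of adjacent vertices,
which is the same as over edges since the quantity is symmetric). -/
theorem maxEig_le_Das_bound {V : Type*} [Fintype V] [DecidableEq V]
    (G : SimpleGraph V) [DecidableRel G.Adj]
    (hE : ((Finset.univ ×ˢ Finset.univ).filter
      (fun p : V × V => G.Adj p.1 p.2)).Nonempty) :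
    lapMu G 1 ≤
      ((Finset.univ ×ˢ Finset.univ).filter (fun p : V × V => G.Adj p.1 p.2)).sup' hE
        (fun p => (G.degree p.1 + G.degree p.2 : ℝ) -
          ((G.neighborFinset p.1 ∩ G.neighborFinset p.2).card : ℝ)) := by
  suffices ∃ u v, G.Adj u v ∧ lapMu G 1 ≤ G.dasBound u v by
    obtain ⟨u, v, huv, hle⟩ := this
    exact hle.trans
      (le_sup' (fun p : V × V => G.dasBound p.1 p.2) (b := (u, v)) (by simpa using huv))
  obtain ⟨⟨a, b⟩, hab⟩ := hE
  rcases le_or_gt (lapMu G 1) 0 with hμ | hμ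
  · refine ⟨a, b, (mem_filter.1 hab).2, hμ.trans ?_⟩
    rw [G.dasBound_eq_card_union]
    exact Nat.cast_nonneg _
  obtain ⟨x, hx0, hx⟩ := exists_lapMatrix_mulVec_eq_smul_of_mem_lapEigs G
    (lapMu_mem_lapEigs G le_rfl (Fintype.card_pos_iff.2 ⟨a⟩))
  exact SimpleGraph.exists_adj_le_dasBound hx hx0 hμ
end

section
/- Let G be a connected graph of order n with chromatic number χ(G). Then the number of Laplacian eigenvalues of G in the interval (n−1, n] is at most χ(G) − 1. -/
/-! Fix a proper colouring `C` with `k` colours and a colour `c₀`. On the subspace `U` of vectors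
whose sums over every colour class other than `c₀` vanish (codimension at most `k - 1`), the
cross-class products `x i * x j` cancel in total, so, since adjacent vertices have different
colours, `xᵀ L x ≤ ½ ∑_{C i ≠ C j} (x i - x j)² = ∑ᵢ (n - |class of i|) (x i)² ≤ (n - 1) ‖x‖²`.
Eigenvectors with eigenvalue above `n - 1` span a space on which `xᵀ L x > (n - 1) ‖x‖²` for
`x ≠ 0`, so it meets `U` trivially and has dimension at most `k - 1`. -/

open scoped Classical

open Finset Module Matrix

section Eigenvectors

variable {E : Type*} [NormedAddCommGroup E] [InnerProductSpace ℝ E]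
  {ι : Type*} [Fintype ι] {T : E →ₗ[ℝ] E} {b : ι → E} {μ : ι → ℝ} {t : ℝ}

theorem lt_inner_map_self_of_mem_span_eigenvectors (hb : Orthonormal ℝ b)
    (hTb : ∀ i, T (b i) = μ i • b i) (hμ : ∀ i, t < μ i) {x : E}
    (hx : x ∈ Submodule.span ℝ (Set.range b)) (hx0 : x ≠ 0) :
    t * ‖x‖ ^ 2 < inner ℝ (T x) x := by
  obtain ⟨c, rfl⟩ := (Submodule.mem_span_range_iff_exists_fun ℝ).mp hx
  have hTx : T (∑ i, c i • b i) = ∑ i, (μ i * c i) • b i := by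
    simp only [map_sum, map_smul, hTb, smul_smul, mul_comm]
  have hnorm : ‖∑ i, c i • b i‖ ^ 2 = ∑ i, c i * c i := by
    rw [← real_inner_self_eq_norm_sq, hb.inner_sum]
    simp
  have hquad : inner ℝ (T (∑ i, c i • b i)) (∑ i, c i • b i) = ∑ i, μ i * (c i * c i) := by
    rw [hTx, hb.inner_sum]
    simp [mul_assoc]
  obtain ⟨i₀, hi₀⟩ : ∃ i, c i ≠ 0 := by
    by_contra! h
    exact hx0 (by simp [h])
  rw [hnorm, hquad, mul_sum]
  refine sum_lt_sum (fun i _ => ?_) ⟨i₀, mem_univ _, ?_⟩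
  · exact mul_le_mul_of_nonneg_right (hμ i).le (mul_self_nonneg _)
  · exact mul_lt_mul_of_pos_right (hμ i₀) (mul_self_pos.mpr hi₀)

theorem card_add_finrank_le_of_inner_map_self_le [FiniteDimensional ℝ E] (hb : Orthonormal ℝ b)
    (hTb : ∀ i, T (b i) = μ i • b i) (hμ : ∀ i, t < μ i) {U : Submodule ℝ E}
    (hU : ∀ x ∈ U, inner ℝ (T x) x ≤ t * ‖x‖ ^ 2) :
    Fintype.card ι + finrank ℝ U ≤ finrank ℝ E := by
  rw [← finrank_span_eq_card hb.linearIndependent]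
  refine Submodule.finrank_add_finrank_le_of_disjoint
    (Submodule.disjoint_def.mpr fun x hxW hxU => ?_)
  by_contra hx0
  exact not_lt.mpr (hU x hxU) (lt_inner_map_self_of_mem_span_eigenvectors hb hTb hμ hxW hx0)

end Eigenvectors

theorem Matrix.IsHermitian.card_lt_eigenvalues_add_finrank_le {ι : Type*} [Fintype ι]
    [DecidableEq ι] {A : Matrix ι ι ℝ} (hA : A.IsHermitian) {t : ℝ} {U : Submodule ℝ (ι → ℝ)}
    (hU : ∀ x ∈ U, x ⬝ᵥ (A *ᵥ x) ≤ t * (x ⬝ᵥ x)) :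
    #{i | t < hA.eigenvalues i} + finrank ℝ U ≤ Fintype.card ι := by
  set U' : Submodule ℝ (EuclideanSpace ℝ ι) :=
    U.map (WithLp.linearEquiv 2 ℝ (ι → ℝ)).symm.toLinearMap
  have hU' : finrank ℝ U' = finrank ℝ U := LinearEquiv.finrank_map_eq _ _
  have := card_add_finrank_le_of_inner_map_self_le (E := EuclideanSpace ℝ ι)
    (T := toLpLin 2 2 A) (U := U')
    (b := fun i : {i // t < hA.eigenvalues i} => hA.eigenvectorBasis i)
    (hA.eigenvectorBasis.orthonormal.comp _ Subtype.val_injective)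
    (fun i => by simp [toLpLin_apply, hA.mulVec_eigenvectorBasis]) (fun i => i.2) ?_
  · rwa [hU', finrank_euclideanSpace, Fintype.card_subtype] at this
  · intro x hx
    rw [Submodule.mem_map_equiv] at hx
    rw [← real_inner_self_eq_norm_sq, EuclideanSpace.inner_eq_star_dotProduct,
      EuclideanSpace.inner_eq_star_dotProduct, toLpLin_apply]
    simpa [dotProduct_comm] using hU _ hx

theorem lapCount_eq_card_filter {V : Type*} [Fintype V] (G : SimpleGraph V) (I : Set ℝ) :
    lapCount G I = #{i | (G.posSemidef_lapMatrix ℝ).1.eigenvalues i ∈ I} := by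
  rw [lapCount, lapEigs, Multiset.filter_map, Multiset.card_map]
  rfl

theorem lapCount_mono {V : Type*} [Fintype V] (G : SimpleGraph V) {I J : Set ℝ} (h : I ⊆ J) :
    lapCount G I ≤ lapCount G J :=
  Multiset.card_le_card (Multiset.monotone_filter_right _ h)

theorem sum_sum_mul_of_apply_ne_eq_zero {V α : Type*} [Fintype V] [Fintype α] (f : V → α)
    (c₀ : α) {x : V → ℝ} (hx : ∀ c ≠ c₀, ∑ v with f v = c, x v = 0) :
    ∑ i, ∑ j with f i ≠ f j, x i * x j = 0 := by
  set σ : α → ℝ := fun c => ∑ v with f v = c, x v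
  have htotal : ∑ j, x j = σ c₀ := by
    rw [← sum_fiberwise univ f x]
    exact sum_eq_single c₀ (fun c _ hc => hx c hc) (by simp)
  have hrow : ∀ i, ∑ j with f i ≠ f j, x i * x j = x i * (σ c₀ - σ (f i)) := by
    intro i
    rw [← mul_sum, ← htotal, ← sum_filter_not_add_sum_filter univ (fun j => f j = f i)]
    simp [σ, eq_comm]
  rw [sum_congr rfl fun i _ => hrow i, ← sum_fiberwise univ f]
  refine sum_eq_zero fun c _ => ?_
  rw [sum_congr rfl fun i hi => by rw [(mem_filter.mp hi).2], ← sum_mul]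
  by_cases hc : c = c₀
  · simp [hc]
  · simp [hx c hc]

namespace SimpleGraph.Coloring

variable {V α : Type*} [Fintype V] [Fintype α] {G : SimpleGraph V}

theorem dotProduct_lapMatrix_mulVec_le (C : G.Coloring α) (c₀ : α) {x : V → ℝ}
    (hx : ∀ c ≠ c₀, ∑ v with C v = c, x v = 0) :
    x ⬝ᵥ (G.lapMatrix ℝ *ᵥ x) ≤ ((Fintype.card V : ℝ) - 1) * (x ⬝ᵥ x) := by
  have hquad : x ⬝ᵥ (G.lapMatrix ℝ *ᵥ x)
      = (∑ i, ∑ j, if G.Adj i j then (x i - x j) ^ 2 else 0) / 2 := by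
    rw [← lapMatrix_toLinearMap₂', toLinearMap₂'_apply']
  have hadj : (∑ i, ∑ j, if G.Adj i j then (x i - x j) ^ 2 else 0)
      ≤ ∑ i, ∑ j with C i ≠ C j, (x i - x j) ^ 2 := by
    refine sum_le_sum fun i _ => ?_
    rw [sum_filter]
    refine sum_le_sum fun j _ => ?_
    by_cases hij : G.Adj i j
    · simp [hij, C.valid hij]
    · rw [if_neg hij]; split_ifs <;> positivity
  have hexpand : ∑ i, ∑ j with C i ≠ C j, (x i - x j) ^ 2
      = 2 * ∑ i, ∑ j with C i ≠ C j, x i ^ 2 - 2 * ∑ i, ∑ j with C i ≠ C j, x i * x j := by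
    have hsymm : ∑ i, ∑ j with C i ≠ C j, x j ^ 2 = ∑ i, ∑ j with C i ≠ C j, x i ^ 2 := by
      simp only [sum_filter]
      rw [sum_comm]
      simp only [ne_comm]
    simp only [sub_sq, sum_add_distrib, sum_sub_distrib, hsymm, mul_assoc, ← mul_sum]
    ring
  have hrow : ∀ i, ∑ j with C i ≠ C j, x i ^ 2 ≤ ((Fintype.card V : ℝ) - 1) * (x i * x i) := by
    intro i
    have hcard : #{j | C i ≠ C j} + 1 ≤ Fintype.card V :=
      card_lt_univ_of_notMem (x := i) (by simp)
    rw [sum_const, nsmul_eq_mul, sq]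
    gcongr
    · exact mul_self_nonneg _
    · rw [le_sub_iff_add_le]; exact_mod_cast hcard
  calc x ⬝ᵥ (G.lapMatrix ℝ *ᵥ x)
      ≤ (∑ i, ∑ j with C i ≠ C j, (x i - x j) ^ 2) / 2 := by rw [hquad]; gcongr
    _ = ∑ i, ∑ j with C i ≠ C j, x i ^ 2 := by
      rw [hexpand, sum_sum_mul_of_apply_ne_eq_zero C c₀ hx]; ring
    _ ≤ ∑ i, ((Fintype.card V : ℝ) - 1) * (x i * x i) := sum_le_sum fun i _ => hrow i
    _ = ((Fintype.card V : ℝ) - 1) * (x ⬝ᵥ x) := by rw [dotProduct, mul_sum]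

theorem lapCount_Ioi_lt_card [Nonempty V] (C : G.Coloring α) :
    lapCount G (Set.Ioi ((Fintype.card V : ℝ) - 1)) < Fintype.card α := by
  set c₀ := C (Classical.arbitrary V)
  set F : (V → ℝ) →ₗ[ℝ] ({c // c ≠ c₀} → ℝ) :=
    LinearMap.pi fun c => ∑ v with C v = c.1, LinearMap.proj v
  have hF : ∀ x ∈ LinearMap.ker F, ∀ c ≠ c₀, ∑ v with C v = c, x v = 0 := fun x hx c hc => by
    simpa [F] using congrFun (LinearMap.mem_ker.mp hx) ⟨c, hc⟩
  have hrank : Fintype.card V ≤ finrank ℝ (LinearMap.ker F) + (Fintype.card α - 1) := by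
    have hsum := F.finrank_range_add_finrank_ker
    have hrange := Submodule.finrank_le (LinearMap.range F)
    simp only [ne_eq, finrank_fintype_fun_eq_card, Fintype.card_subtype_compl,
      Fintype.card_unique] at hsum hrange
    omega
  have hcount := (G.posSemidef_lapMatrix ℝ).1.card_lt_eigenvalues_add_finrank_le
    fun x hx => C.dotProduct_lapMatrix_mulVec_le c₀ (hF x hx)
  have hα : 0 < Fintype.card α := Fintype.card_pos_iff.2 ⟨c₀⟩
  rw [lapCount_eq_card_filter]
  simp only [Set.mem_Ioi]
  omega

end SimpleGraph.Coloring

theorem lapCount_le_chromaticNumber_sub_one_general {n : ℕ} (G : SimpleGraph (Fin n)) :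
    (lapCount G (Set.Ioc ((n : ℝ) - 1) n) : ℕ∞) ≤ G.chromaticNumber - 1 := by
  rcases isEmpty_or_nonempty (Fin n) with _ | _
  · simp [lapCount, lapEigs]
  refine ENat.le_sub_one_of_lt (ENat.natCast_add_one_le_iff.mp
    (SimpleGraph.le_chromaticNumber_iff_coloring.mpr fun m C => ?_))
  have hlt := C.lapCount_Ioi_lt_card
  rw [Fintype.card_fin, Fintype.card_fin] at hlt
  have hmono := lapCount_mono G (I := Set.Ioc ((n : ℝ) - 1) n) Set.Ioc_subset_Ioi_self
  show lapCount G _ + 1 ≤ m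
  omega

/-- For a connected graph `G` of order `n`, the number of Laplacian eigenvalues in
`(n−1, n]` is at most `χ(G) − 1`. -/
theorem lapCount_le_chromaticNumber_sub_one {n : ℕ} (G : SimpleGraph (Fin n))
    (hconn : G.Connected) :
    (lapCount G (Set.Ioc ((n : ℝ) - 1) n) : ℕ∞) ≤ G.chromaticNumber - 1 :=
  lapCount_le_chromaticNumber_sub_one_general G
end

section
/- Let G be the unicyclic graph U_t obtained from a cycle C_g by joining t ≥ 2 pairwise non-adjacent new vertices to a single vertex of the cycle, so n = g + t. Then the second largest Laplacian eigenvalue satisfies μ₂(G) ≤ t + 3 = n − g + 3. -/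
open scoped Classical

/-- `Ut g t` is the unicyclic graph on `g + t` vertices obtained from the cycle `C_g`
(on the vertices `0, …, g−1`) by joining `t` new pairwise non-adjacent pendant vertices
`g, …, g+t−1` to the cycle vertex `0`. -/
def Ut (g t : ℕ) : SimpleGraph (Fin (g + t)) :=
  SimpleGraph.fromRel fun i j =>
    (∃ hi : (i : ℕ) < g, ∃ hj : (j : ℕ) < g,
      (SimpleGraph.cycleGraph g).Adj ⟨i, hi⟩ ⟨j, hj⟩) ∨
    ((i : ℕ) = 0 ∧ g ≤ (j : ℕ))

/-!
Since `(x i - x j)² ≤ 2 x i² + 2 x j²`, the Laplacian form satisfies `xᵀ L x ≤ 2 ∑ deg(i) x i²`.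
In `U_t` every vertex other than the hub has degree at most `2`, so on the hyperplane where
`x` vanishes at the hub the form is at most `4 ‖x‖²`. The span of eigenvectors for `μ₁, μ₂`
meets this hyperplane nontrivially, hence `μ₂ ≤ 4 ≤ t + 3`.
-/

open Matrix Finset SimpleGraph

theorem List.Pairwise.length_sub_le_countP_of_lt_getElem {α : Type*} [Preorder α]
    [DecidableLT α] {l : List α} (hl : l.Pairwise (· ≤ ·)) {k : ℕ} (hk : k < l.length) {c : α}
    (hc : c < l[k]) : l.length - k ≤ l.countP (c < ·) := by
  have hdrop := List.drop_eq_getElem_cons hk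
  have hhead : ∀ y ∈ l.drop k, c < y := by
    have := hl.sublist (List.drop_sublist k l)
    rw [hdrop, List.pairwise_cons] at this
    rw [hdrop]
    rintro y (_ | ⟨_, hy⟩)
    · exact hc
    · exact hc.trans_le (this.1 y hy)
  calc l.length - k = (l.drop k).countP (c < ·) := by
        rw [List.countP_eq_length.mpr (by simpa using hhead), List.length_drop]
    _ ≤ l.countP (c < ·) := (List.drop_sublist k l).countP_le

lemma lapMu_le_of_countP_lt {V : Type*} [Fintype V] (G : SimpleGraph V) {k : ℕ}
    (hk : k ≤ Fintype.card V) {c : ℝ} (h : (lapEigs G).countP (c < ·) < k) :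
    lapMu G k ≤ c := by
  set l := lapEigsAsc G
  have hlen : l.length = Fintype.card V := by simp [l, lapEigsAsc, lapEigs]
  have hidx : Fintype.card V - k < l.length := by omega
  rw [lapMu, List.getD_eq_getElem _ _ hidx]
  by_contra! hc
  have hsort : l.Pairwise (· ≤ ·) := Multiset.pairwise_sort _ _
  have hcount := hsort.length_sub_le_countP_of_lt_getElem hidx hc
  have hcoe : (l : Multiset ℝ) = lapEigs G := Multiset.sort_eq _ _
  rw [← hcoe, Multiset.coe_countP] at h
  omega

theorem Matrix.IsHermitian.card_filter_lt_eigenvalues_le_one {n : Type*} [Fintype n]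
    [DecidableEq n] {A : Matrix n n ℝ} (hA : A.IsHermitian) {c : ℝ} (i₀ : n)
    (h : ∀ x : n → ℝ, x i₀ = 0 → x ⬝ᵥ A *ᵥ x ≤ c * (x ⬝ᵥ x)) :
    #{i | c < hA.eigenvalues i} ≤ 1 := by
  refine Finset.card_le_one.mpr fun i hi j hj => by_contra fun hij => ?_
  simp only [mem_filter, mem_univ, true_and] at hi hj
  have hdot (k l : n) : ⇑(hA.eigenvectorBasis k) ⬝ᵥ ⇑(hA.eigenvectorBasis l) =
      if k = l then 1 else 0 := by
    rw [← orthonormal_iff_ite.mp hA.eigenvectorBasis.orthonormal k l,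
      EuclideanSpace.inner_eq_star_dotProduct, star_trivial, dotProduct_comm]
  set v := ⇑(hA.eigenvectorBasis i)
  set w := ⇑(hA.eigenvectorBasis j)
  obtain ⟨a, b, hab, hx⟩ : ∃ a b : ℝ, 0 < a ^ 2 + b ^ 2 ∧ a * v i₀ + b * w i₀ = 0 := by
    by_cases hv : v i₀ = 0
    · exact ⟨1, 0, by norm_num, by simp [hv]⟩
    · exact ⟨w i₀, -v i₀, by have := neg_ne_zero.mpr hv; positivity, by ring⟩
  have hquad : (a • v + b • w) ⬝ᵥ A *ᵥ (a • v + b • w) =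
      a ^ 2 * hA.eigenvalues i + b ^ 2 * hA.eigenvalues j := by
    simp only [mulVec_add, mulVec_smul, v, w, hA.mulVec_eigenvectorBasis, dotProduct_add,
      add_dotProduct, dotProduct_smul, smul_dotProduct, smul_eq_mul, hdot, Ne.symm hij, hij,
      ↓reduceIte, mul_one, mul_zero, add_zero, zero_add]
    ring
  have hnorm : (a • v + b • w) ⬝ᵥ (a • v + b • w) = a ^ 2 + b ^ 2 := by
    simp only [v, w, dotProduct_add, add_dotProduct, dotProduct_smul, smul_dotProduct, smul_eq_mul,
      hdot, Ne.symm hij, hij, ↓reduceIte, mul_one, mul_zero, add_zero, zero_add]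
    ring
  have hle := h (a • v + b • w) (by simpa using hx)
  rw [hquad, hnorm] at hle
  have hmi := min_le_left (hA.eigenvalues i) (hA.eigenvalues j)
  have hmj := min_le_right (hA.eigenvalues i) (hA.eigenvalues j)
  nlinarith [mul_le_mul_of_nonneg_left hmi (sq_nonneg a),
    mul_le_mul_of_nonneg_left hmj (sq_nonneg b), mul_pos (sub_pos.mpr (lt_min hi hj)) hab]

theorem SimpleGraph.dotProduct_lapMatrix_mulVec_le {V : Type*} [Fintype V] [DecidableEq V]
    (G : SimpleGraph V) [DecidableRel G.Adj] (x : V → ℝ) :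
    x ⬝ᵥ G.lapMatrix ℝ *ᵥ x ≤ 2 * ∑ i, G.degree i * x i ^ 2 := by
  have hsym : ∑ i, ∑ j, (if G.Adj i j then x j ^ 2 else 0)
      = ∑ i, ∑ j, if G.Adj i j then x i ^ 2 else 0 := by
    rw [Finset.sum_comm]
    simp_rw [G.adj_comm]
  calc x ⬝ᵥ G.lapMatrix ℝ *ᵥ x
      = (∑ i, ∑ j, if G.Adj i j then (x i - x j) ^ 2 else 0) / 2 := by
        rw [← toLinearMap₂'_apply', lapMatrix_toLinearMap₂']
    _ ≤ (∑ i, ∑ j, if G.Adj i j then 2 * x i ^ 2 + 2 * x j ^ 2 else 0) / 2 := by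
        gcongr with i _ j _
        split_ifs
        · nlinarith [sq_nonneg (x i + x j)]
        · rfl
    _ = (2 * ∑ i, ∑ j, (if G.Adj i j then x i ^ 2 else 0)
          + 2 * ∑ i, ∑ j, if G.Adj i j then x j ^ 2 else 0) / 2 := by
        simp only [Finset.mul_sum, ← Finset.sum_add_distrib, mul_ite, mul_zero, ite_add_ite,
          add_zero]
    _ = 2 * ∑ i, ∑ j, if G.Adj i j then x i ^ 2 else 0 := by
        rw [hsym]; ring
    _ = 2 * ∑ i, G.degree i * x i ^ 2 := by
        simp only [G.degree_eq_sum_if_adj (R := ℝ), Finset.sum_mul, ite_mul, one_mul, zero_mul]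

theorem lapMu_two_le_two_mul_of_degree_le {V : Type*} [Fintype V] (G : SimpleGraph V) (v : V)
    {d : ℕ} (hd : ∀ w ≠ v, G.degree w ≤ d) (hV : 2 ≤ Fintype.card V) :
    lapMu G 2 ≤ 2 * d := by
  have hL := (posSemidef_lapMatrix ℝ G).1
  have hquad (x : V → ℝ) (hx : x v = 0) :
      x ⬝ᵥ G.lapMatrix ℝ *ᵥ x ≤ 2 * d * (x ⬝ᵥ x) := by
    have hdeg (i : V) : G.degree i * x i ^ 2 ≤ d * x i ^ 2 := by
      rcases eq_or_ne i v with rfl | hi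
      · simp [hx]
      · gcongr; exact_mod_cast hd i hi
    calc x ⬝ᵥ G.lapMatrix ℝ *ᵥ x ≤ 2 * ∑ i, G.degree i * x i ^ 2 :=
          G.dotProduct_lapMatrix_mulVec_le x
      _ ≤ 2 * ∑ i, d * x i ^ 2 := by gcongr 2 * ?_; exact sum_le_sum fun i _ => hdeg i
      _ = 2 * d * (x ⬝ᵥ x) := by simp [dotProduct, Finset.mul_sum, sq, mul_assoc]
  refine lapMu_le_of_countP_lt G hV ?_
  rw [lapEigs, Multiset.countP_map, ← Finset.filter_val]
  exact Nat.lt_succ_of_le (hL.card_filter_lt_eigenvalues_le_one v hquad)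

lemma SimpleGraph.cycleGraph_degree_le_two : ∀ {n : ℕ} (v : Fin n), (cycleGraph n).degree v ≤ 2
  | 0, v => v.elim0
  | 1, v => by simp [cycleGraph_one_eq_bot]
  | _ + 2, _ => cycleGraph_degree_two_le.trans_le card_le_two

lemma Ut_degree_le_two {g t : ℕ} (i : Fin (g + t)) (hi : (i : ℕ) ≠ 0) :
    (Ut g t).degree i ≤ 2 := by
  rw [← card_neighborFinset_eq_degree]
  by_cases hig : (i : ℕ) < g
  · calc #((Ut g t).neighborFinset i)
        ≤ #(((cycleGraph g).neighborFinset ⟨i, hig⟩).map (Fin.castLEEmb (g.le_add_right t))) := by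
          refine card_le_card fun j hj => ?_
          rw [mem_neighborFinset, Ut, fromRel_adj] at hj
          simp only [mem_map, mem_neighborFinset]
          rcases hj with ⟨-, (⟨_, hj, hadj⟩ | ⟨h0, -⟩) | (⟨hj, _, hadj⟩ | ⟨-, hgi⟩)⟩
          · exact ⟨⟨j, hj⟩, hadj, rfl⟩
          · exact absurd h0 hi
          · exact ⟨⟨j, hj⟩, hadj.symm, rfl⟩
          · omega
      _ ≤ 2 := by rw [card_map]; exact cycleGraph_degree_le_two _
  · calc #((Ut g t).neighborFinset i) ≤ #{(⟨0, by omega⟩ : Fin (g + t))} := by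
          refine card_le_card fun j hj => ?_
          rw [mem_neighborFinset, Ut, fromRel_adj] at hj
          rw [mem_singleton, Fin.ext_iff]
          rcases hj with ⟨-, (⟨hi', -⟩ | ⟨h0, -⟩) | (⟨-, hi', -⟩ | ⟨hj0, -⟩)⟩ <;> omega
      _ ≤ 2 := by simp

theorem Ut_second_eig_le_general (g t : ℕ) (ht : 2 ≤ t) :
    lapMu (Ut g t) 2 ≤ (t : ℝ) + 3 := by
  have hμ : lapMu (Ut g t) 2 ≤ 2 * (2 : ℕ) :=
    lapMu_two_le_two_mul_of_degree_le (Ut g t) ⟨0, by omega⟩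
      (fun w hw => Ut_degree_le_two w (Fin.val_ne_iff.mpr hw)) (by rw [Fintype.card_fin]; omega)
  have ht' : (2 : ℝ) ≤ t := by exact_mod_cast ht
  norm_num at hμ
  linarith

/-- For `U_t` (`g ≥ 3`, `t ≥ 2`, `n = g + t`), the second largest Laplacian eigenvalue
satisfies `μ₂ ≤ t + 3 = n − g + 3`. -/
theorem Ut_second_eig_le (g t : ℕ) (hg : 3 ≤ g) (ht : 2 ≤ t) :
    lapMu (Ut g t) 2 ≤ (t : ℝ) + 3 :=
  Ut_second_eig_le_general g t ht
end
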